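/- arXiv:1902.07992 — 2 statements merged into one kernel-verified Lean document; each statement's English description precedes it below -/
import Mathlib

section
/- Let M₀ = [[r, pλ],[-qλ⁻¹, r*]] and M₁ = [[r, -pλ],[qλ⁻¹, r*]] be SL₂-valued loops with r r* + p q = 1. If q/p* admits a factorization q/p* = δε x₊* x₊ with x₊ : D₊ → ℂ* holomorphic and non-vanishing, then setting X = diag(√x₊, 1/√x₊), both X M₀ X⁻¹ and X M₁ X⁻¹ have the form [[r, s],[-ε s*, r*]] and [[r, -s],[ε s*, r*]] respectively with s = p x₊ λ, and hence are unitary with respect to the involution P*(λ) = η (P(δ/λ̄)̄ᵀ)⁻¹ η⁻¹. -/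
open Complex ComplexConjugate Matrix

/-!
With `y² = x₊`, conjugation by `diag(y, y⁻¹)` scales the off-diagonal entries by `x₊^{±1}`, and
the factorization `q/p* = δε x₊* x₊` turns the lower left entry `∓q λ⁻¹` into `∓ε s*` with
`s = p x₊ λ`; so `r r* + p q = 1` reads `r r* + ε s s* = 1`. For a matrix of determinant one,
`(Aᴴ)⁻¹` is the conjugate of its adjugate, and conjugation by `η` changes the signs of the
off-diagonal entries exactly when `ε = -1`; hence `[[r, s], [-ε s*, r*]]` is fixed by the
involution.
-/

theorem conjTranspose_fin_two_of {K : Type*} [Star K] (a b c d : K) :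
    !![a, b; c, d]ᴴ = !![star a, star c; star b, star d] := by
  ext i j; fin_cases i <;> fin_cases j <;> rfl

theorem inv_fin_two_of_det_eq_one {K : Type*} [CommRing K] {a b c d : K}
    (h : a * d - b * c = 1) : (!![a, b; c, d])⁻¹ = !![d, -b; -c, a] := by
  rw [Matrix.inv_def, det_fin_two_of, h, adjugate_fin_two_of]; simp

theorem conjTranspose_inv_fin_two_of_det_eq_one {K : Type*} [CommRing K] [StarRing K]
    {a b c d : K} (h : a * d - b * c = 1) :
    (!![a, b; c, d]ᴴ)⁻¹ = !![star d, -star c; -star b, star a] := by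
  rw [← conjTranspose_nonsing_inv, inv_fin_two_of_det_eq_one h, conjTranspose_fin_two_of]
  simp only [star_neg]

theorem diag_mul_mul_inv_fin_two {K : Type*} [Field K] {y : K} (hy : y ≠ 0) (a b c d : K) :
    !![y, 0; 0, y⁻¹] * !![a, b; c, d] * (!![y, 0; 0, y⁻¹])⁻¹ =
      !![a, y ^ 2 * b; c / y ^ 2, d] := by
  rw [inv_fin_two_of_det_eq_one (by simp [hy])]
  ext i j; fin_cases i <;> fin_cases j <;> simp [field]

theorem eta_mul_mul_inv {ε : ℂ} (hε : ε = 1 ∨ ε = -1) (a b c d : ℂ) :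
    (if ε = 1 then 1 else !![I, 0; 0, -I]) * !![a, b; c, d] *
      (if ε = 1 then 1 else !![I, 0; 0, -I] : Matrix (Fin 2) (Fin 2) ℂ)⁻¹ =
      !![a, ε * b; ε * c, d] := by
  rcases hε with rfl | rfl
  · simp
  · rw [if_neg (by norm_num), inv_fin_two_of_det_eq_one (by simp)]
    ext i j; fin_cases i <;> fin_cases j <;> simp [mul_right_comm _ _ I]

theorem conj_eq_self_of_eq_one_or_eq_neg_one {ε : ℂ} (hε : ε = 1 ∨ ε = -1) : conj ε = ε := by
  rcases hε with rfl | rfl <;> simp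

section Unitary

variable {ε : ℂ} (hε : ε = 1 ∨ ε = -1)
include hε

theorem eta_mul_conjTranspose_inv_mul_eta_inv {a b c d : ℂ} (h : a * conj d + ε * b * conj c = 1) :
    (if ε = 1 then 1 else !![I, 0; 0, -I]) * (!![a, b; -(ε * conj c), conj d]ᴴ)⁻¹ *
      (if ε = 1 then 1 else !![I, 0; 0, -I] : Matrix (Fin 2) (Fin 2) ℂ)⁻¹ =
      !![d, c; -(ε * conj b), conj a] := by
  have hεε : ε * ε = 1 := by rcases hε with rfl | rfl <;> norm_num
  rw [conjTranspose_inv_fin_two_of_det_eq_one (by linear_combination h),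
    eta_mul_mul_inv hε]
  simp only [star_def, conj_conj, map_neg, map_mul, conj_eq_self_of_eq_one_or_eq_neg_one hε]
  rw [neg_neg, ← mul_assoc, hεε, one_mul, mul_neg]

theorem eta_mul_conjTranspose_inv_mul_eta_inv' {a b c d : ℂ} (h : a * conj d + ε * b * conj c = 1) :
    (if ε = 1 then 1 else !![I, 0; 0, -I]) * (!![a, -b; ε * conj c, conj d]ᴴ)⁻¹ *
      (if ε = 1 then 1 else !![I, 0; 0, -I] : Matrix (Fin 2) (Fin 2) ℂ)⁻¹ =
      !![d, -c; ε * conj b, conj a] := by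
  simpa only [map_neg, mul_neg, neg_neg] using
    eta_mul_conjTranspose_inv_mul_eta_inv hε (b := -b) (c := -c)
      (by simpa only [map_neg, mul_neg, neg_mul, neg_neg])

end Unitary

section Reflection

variable {δ : ℂ} (hδ : conj δ = δ)
include hδ

theorem conj_div_conj (lam : ℂ) : conj (δ / conj lam) = δ / lam := by
  rw [map_div₀, hδ, conj_conj]

theorem div_conj_div_conj (hδ0 : δ ≠ 0) (lam : ℂ) : δ / conj (δ / conj lam) = lam := by
  rw [conj_div_conj hδ, div_div_cancel₀ hδ0]

theorem mul_inv_div_eq_of_div_conj_eq {ε lam P Q x x' : ℂ} (hδ0 : δ ≠ 0) (hε0 : ε ≠ 0)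
    (hx : x ≠ 0) (hx' : x' ≠ 0) (h : Q / conj P = δ * ε * conj x' * x) :
    Q * lam⁻¹ / x = ε * conj (P * x' * (δ / conj lam)) := by
  have hP : conj P ≠ 0 := by
    rintro hP
    rw [hP, div_zero] at h
    exact mul_ne_zero (mul_ne_zero (mul_ne_zero hδ0 hε0) ((map_ne_zero _).2 hx')) hx h.symm
  rw [div_eq_iff hP] at h
  rw [map_mul, map_mul, conj_div_conj hδ, h]
  field_simp

end Reflection

theorem stmt9_general (δ ε : ℂ) (hδ : δ = 1 ∨ δ = -1) (hε : ε = 1 ∨ ε = -1)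
    (p q r xp y : ℂ → ℂ) (η : Matrix (Fin 2) (Fin 2) ℂ)
    (hη : η = if ε = 1 then (1 : Matrix (Fin 2) (Fin 2) ℂ)
      else !![Complex.I, 0; 0, -Complex.I])
    (hdet : ∀ lam : ℂ, lam ≠ 0 →
      r lam * conj (r (δ / conj lam)) + p lam * q lam = 1)
    (hfact : ∀ lam : ℂ, ‖lam‖ = 1 →
      q lam / conj (p (δ / conj lam)) = δ * ε * conj (xp (δ / conj lam)) * xp lam)
    (hxp : ∀ lam : ℂ, ‖lam‖ = 1 → xp lam ≠ 0)
    (hy : ∀ lam : ℂ, y lam ^ 2 = xp lam)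
    (M₀ M₁ X P₀ P₁ : ℂ → Matrix (Fin 2) (Fin 2) ℂ)
    (hM₀ : ∀ lam, M₀ lam =
      !![r lam, p lam * lam; -(q lam) * lam⁻¹, conj (r (δ / conj lam))])
    (hM₁ : ∀ lam, M₁ lam =
      !![r lam, -(p lam * lam); q lam * lam⁻¹, conj (r (δ / conj lam))])
    (hX : ∀ lam, X lam = !![y lam, 0; 0, (y lam)⁻¹])
    (hP₀ : ∀ lam, P₀ lam =
      !![r lam, p lam * xp lam * lam;
         -(ε * conj (p (δ / conj lam) * xp (δ / conj lam) * (δ / conj lam))),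
         conj (r (δ / conj lam))])
    (hP₁ : ∀ lam, P₁ lam =
      !![r lam, -(p lam * xp lam * lam);
         ε * conj (p (δ / conj lam) * xp (δ / conj lam) * (δ / conj lam)),
         conj (r (δ / conj lam))]) :
    (∀ lam : ℂ, ‖lam‖ = 1 →
      X lam * M₀ lam * (X lam)⁻¹ = P₀ lam ∧
      X lam * M₁ lam * (X lam)⁻¹ = P₁ lam) ∧
    (∀ lam : ℂ, ‖lam‖ = 1 →
      η * ((P₀ (δ / conj lam)).conjTranspose)⁻¹ * η⁻¹ = P₀ lam ∧
      η * ((P₁ (δ / conj lam)).conjTranspose)⁻¹ * η⁻¹ = P₁ lam) := by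
  have hδr : conj δ = δ := conj_eq_self_of_eq_one_or_eq_neg_one hδ
  have hδ0 : δ ≠ 0 := by rcases hδ with rfl | rfl <;> norm_num
  have hε0 : ε ≠ 0 := by rcases hε with rfl | rfl <;> norm_num
  have hnorm : ∀ lam : ℂ, ‖lam‖ = 1 → ‖δ / conj lam‖ = 1 := fun lam hl => by
    rcases hδ with rfl | rfl <;> simp [hl]
  have hlower : ∀ lam : ℂ, ‖lam‖ = 1 → q lam * lam⁻¹ / xp lam =
      ε * conj (p (δ / conj lam) * xp (δ / conj lam) * (δ / conj lam)) := fun lam hl =>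
    mul_inv_div_eq_of_div_conj_eq hδr hδ0 hε0 (hxp lam hl) (hxp _ (hnorm lam hl)) (hfact lam hl)
  have hdet' : ∀ lam : ℂ, ‖lam‖ = 1 → r lam * conj (r (δ / conj lam)) +
      ε * (p lam * xp lam * lam) * conj (p (δ / conj lam) * xp (δ / conj lam) * (δ / conj lam))
        = 1 := fun lam hl => by
    have hl0 : lam ≠ 0 := norm_ne_zero_iff.1 (by rw [hl]; norm_num)
    have hx := hxp lam hl
    rw [mul_right_comm ε, ← hlower lam hl, ← hdet lam hl0]
    field_simp
  refine ⟨fun lam hl => ?_, fun lam hl => ?_⟩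
  · have hy0 : y lam ≠ 0 := fun h => hxp lam hl (by rw [← hy, h, zero_pow two_ne_zero])
    rw [hX, hM₀, hM₁, hP₀, hP₁, diag_mul_mul_inv_fin_two hy0, diag_mul_mul_inv_fin_two hy0, hy,
      neg_mul, neg_div, hlower lam hl, mul_neg, mul_left_comm (xp lam), ← mul_assoc]
    exact ⟨rfl, rfl⟩
  · have hμ := hdet' _ (hnorm lam hl)
    rw [div_conj_div_conj hδr hδ0] at hμ
    simp only [hP₀, hP₁, div_conj_div_conj hδr hδ0, hη]
    exact ⟨eta_mul_conjTranspose_inv_mul_eta_inv hε hμ,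
      eta_mul_conjTranspose_inv_mul_eta_inv' hε hμ⟩

/-- Unitarization of the isosceles trinoid monodromies. If `q/p* = δε x₊* x₊`
with `x₊` nonvanishing, then conjugating `M₀`, `M₁` by
`X = diag(√x₊, 1/√x₊)` yields matrices of the form `[[r, s],[-ε s*, r*]]`,
`[[r, -s],[ε s*, r*]]` with `s = p x₊ λ`, which are unitary for the involution
`P*(λ) = η (P(δ/λ̄)ᴴ)⁻¹ η⁻¹`. Here `f*(λ) = conj (f (δ/λ̄))` on scalars. -/
theorem stmt9 (δ ε : ℂ) (hδ : δ = 1 ∨ δ = -1) (hε : ε = 1 ∨ ε = -1)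
    (p q r xp y : ℂ → ℂ) (η : Matrix (Fin 2) (Fin 2) ℂ)
    (hη : η = if ε = 1 then (1 : Matrix (Fin 2) (Fin 2) ℂ)
      else !![Complex.I, 0; 0, -Complex.I])
    (hdet : ∀ lam : ℂ, lam ≠ 0 →
      r lam * conj (r (δ / conj lam)) + p lam * q lam = 1)
    (hp : ∀ lam : ℂ, lam ≠ 0 → conj (p (δ / conj lam)) = δ * p lam)
    (hq : ∀ lam : ℂ, lam ≠ 0 → conj (q (δ / conj lam)) = δ * q lam)
    (hfact : ∀ lam : ℂ, ‖lam‖ = 1 →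
      q lam / conj (p (δ / conj lam)) = δ * ε * conj (xp (δ / conj lam)) * xp lam)
    (hxp : ∀ lam : ℂ, ‖lam‖ = 1 → xp lam ≠ 0)
    (hy : ∀ lam : ℂ, y lam ^ 2 = xp lam)
    (M₀ M₁ X P₀ P₁ : ℂ → Matrix (Fin 2) (Fin 2) ℂ)
    (hM₀ : ∀ lam, M₀ lam =
      !![r lam, p lam * lam; -(q lam) * lam⁻¹, conj (r (δ / conj lam))])
    (hM₁ : ∀ lam, M₁ lam =
      !![r lam, -(p lam * lam); q lam * lam⁻¹, conj (r (δ / conj lam))])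
    (hX : ∀ lam, X lam = !![y lam, 0; 0, (y lam)⁻¹])
    (hP₀ : ∀ lam, P₀ lam =
      !![r lam, p lam * xp lam * lam;
         -(ε * conj (p (δ / conj lam) * xp (δ / conj lam) * (δ / conj lam))),
         conj (r (δ / conj lam))])
    (hP₁ : ∀ lam, P₁ lam =
      !![r lam, -(p lam * xp lam * lam);
         ε * conj (p (δ / conj lam) * xp (δ / conj lam) * (δ / conj lam)),
         conj (r (δ / conj lam))]) :
    (∀ lam : ℂ, ‖lam‖ = 1 →
      X lam * M₀ lam * (X lam)⁻¹ = P₀ lam ∧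
      X lam * M₁ lam * (X lam)⁻¹ = P₁ lam) ∧
    (∀ lam : ℂ, ‖lam‖ = 1 →
      η * ((P₀ (δ / conj lam)).conjTranspose)⁻¹ * η⁻¹ = P₀ lam ∧
      η * ((P₁ (δ / conj lam)).conjTranspose)⁻¹ * η⁻¹ = P₁ lam) :=
  stmt9_general δ ε hδ hε p q r xp y η hη hdet hfact hxp hy M₀ M₁ X P₀ P₁ hM₀ hM₁ hX hP₀ hP₁
end

section
/- Define νₖ = ½ - ½√(1 + qₖ κ) and tₖ = cos(2π νₖ), k = 0,1,2, and φ = 1 - t₀² - t₁² - t₂² + 2t₀t₁t₂. Then as a power series in κ at κ = 0, φ(κ) = c κ⁴ + O(κ⁵) with c = (π⁴/64)(q₀+q₁+q₂)(-q₀+q₁+q₂)(q₀-q₁+q₂)(q₀+q₁-q₂). -/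
/-!
With `aₖ = πνₖ` one has `tₖ = cos 2aₖ`, and the trace polynomial factors as
`φ = 4 sin(a₀+a₁+a₂) sin(-a₀+a₁+a₂) sin(a₀-a₁+a₂) sin(a₀+a₁-a₂)`.
Since `νₖ(0) = 0` and `νₖ'(0) = -qₖ/4`, each factor is `-(π/4)(±q₀±q₁±q₂) κ + O(κ²)`,
so the product is `c κ⁴ + O(κ⁵)`.
-/

open Complex Asymptotics Filter Topology
open scoped Real

section NormedField

variable {𝕜 : Type*} [NontriviallyNormedField 𝕜]

theorem AnalyticAt.isBigO_sub_sub_smul_deriv {E : Type*} [NormedAddCommGroup E] [NormedSpace 𝕜 E]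
    {f : 𝕜 → E} {x : 𝕜} (hf : AnalyticAt 𝕜 f x) :
    (fun y => f (x + y) - f x - y • deriv f x) =O[𝓝 0] fun y => y ^ 2 := by
  obtain ⟨p, hp⟩ := hf
  have partialSum_two : ∀ y, p.partialSum 2 y = f x + y • deriv f x := by
    intro y
    simp [FormalMultilinearSeries.partialSum, Finset.sum_range_succ, hp.deriv]
    exact hp.coeff_zero _
  simpa [partialSum_two, sub_sub, ← norm_pow] using hp.isBigO_sub_partialSum_pow 2

theorem isBigO_mul_sub_mul_pow {f g : 𝕜 → 𝕜} {a b : 𝕜} {m n : ℕ}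
    (hf : (fun z => f z - a * z ^ m) =O[𝓝 0] fun z => z ^ (m + 1))
    (hg : (fun z => g z - b * z ^ n) =O[𝓝 0] fun z => z ^ (n + 1)) :
    (fun z => f z * g z - a * b * z ^ (m + n)) =O[𝓝 0] fun z => z ^ (m + n + 1) := by
  have hg' : g =O[𝓝 0] fun z => z ^ n := by
    simpa using (hg.trans (isLittleO_pow_pow n.lt_succ_self).isBigO).add
      ((isBigO_refl (fun z : 𝕜 => z ^ n) _).const_mul_left b)
  have h₁ : (fun z => (f z - a * z ^ m) * g z) =O[𝓝 0] fun z => z ^ (m + n + 1) :=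
    (hf.mul hg').congr_right fun z => by ring
  have h₂ : (fun z => a * z ^ m * (g z - b * z ^ n)) =O[𝓝 0] fun z => z ^ (m + n + 1) :=
    (((isBigO_refl (fun z : 𝕜 => z ^ m) _).const_mul_left a).mul hg).congr_right fun z => by ring
  exact (h₁.add h₂).congr_left fun z => by ring

end NormedField

theorem analyticAt_one_add_mul_cpow (q s : ℂ) : AnalyticAt ℂ (fun z : ℂ => (1 + q * z) ^ s) 0 :=
  (analyticAt_const.add (analyticAt_const.mul analyticAt_id)).cpow analyticAt_const (by simp)

theorem hasDerivAt_one_add_mul_cpow (q s : ℂ) :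
    HasDerivAt (fun z : ℂ => (1 + q * z) ^ s) (s * q) 0 := by
  have h := (((hasDerivAt_id (0 : ℂ)).const_mul q).const_add 1).cpow_const (c := s) (by simp)
  simpa using h

theorem isBigO_sin_comp_sub_mul {u : ℂ → ℂ} {m : ℂ} (hu : AnalyticAt ℂ u 0) (hu₀ : u 0 = 0)
    (hm : HasDerivAt u m 0) : (fun z => sin (u z) - m * z) =O[𝓝 0] fun z => z ^ 2 := by
  have h := (analyticAt_sin.comp hu).isBigO_sub_sub_smul_deriv
  simpa [Function.comp_def, hu₀, hm.csin.deriv, mul_comm] using h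

def goldmanPoly (x y z : ℂ) : ℂ := 1 - x ^ 2 - y ^ 2 - z ^ 2 + 2 * x * y * z

theorem goldmanPoly_cos_two_mul (a b c : ℂ) :
    goldmanPoly (cos (2 * a)) (cos (2 * b)) (cos (2 * c)) =
      4 * sin (a + b + c) * sin (-a + b + c) * sin (a - b + c) * sin (a + b - c) := by
  simp only [goldmanPoly, cos, sin, two_mul, neg_add, neg_sub, neg_neg, add_mul, sub_mul, neg_mul,
    exp_add, exp_sub, exp_neg]
  have ha := exp_ne_zero (a * I)
  have hb := exp_ne_zero (b * I)
  have hc := exp_ne_zero (c * I)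
  field_simp
  ring_nf
  simp only [I_pow_four]
  ring

/-- Series expansion of the trace polynomial: with
`νₖ = ½ - ½√(1 + qₖκ)`, `tₖ = cos(2πνₖ)` and
`φ = 1 - t₀² - t₁² - t₂² + 2t₀t₁t₂`, one has `φ(κ) = cκ⁴ + O(κ⁵)` at `κ = 0`,
where `c = (π⁴/64)(q₀+q₁+q₂)(-q₀+q₁+q₂)(q₀-q₁+q₂)(q₀+q₁-q₂)`. -/
theorem stmt12 (q₀ q₁ q₂ : ℝ) (ν t : ℝ → ℂ → ℂ) (φ : ℂ → ℂ) (c : ℂ)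
    (hν : ∀ (qk : ℝ) (κ : ℂ), ν qk κ = 1 / 2 - 1 / 2 * (1 + (qk : ℂ) * κ) ^ ((1 : ℂ) / 2))
    (ht : ∀ (qk : ℝ) (κ : ℂ), t qk κ = Complex.cos (2 * (Real.pi : ℂ) * ν qk κ))
    (hφ : ∀ κ : ℂ, φ κ = 1 - (t q₀ κ) ^ 2 - (t q₁ κ) ^ 2 - (t q₂ κ) ^ 2 +
      2 * t q₀ κ * t q₁ κ * t q₂ κ)
    (hc : c = ((Real.pi ^ 4 / 64 : ℝ) : ℂ) *
      (((q₀ + q₁ + q₂ : ℝ) : ℂ) * ((-q₀ + q₁ + q₂ : ℝ) : ℂ) *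
       ((q₀ - q₁ + q₂ : ℝ) : ℂ) * ((q₀ + q₁ - q₂ : ℝ) : ℂ))) :
    (fun κ : ℂ => φ κ - c * κ ^ 4) =O[nhds 0] (fun κ : ℂ => κ ^ 5) := by
  have hν_analytic (q : ℝ) : AnalyticAt ℂ (ν q) 0 := by
    rw [funext (hν q)]
    exact analyticAt_const.sub (analyticAt_const.mul (analyticAt_one_add_mul_cpow _ _))
  have hν_deriv (q : ℝ) : HasDerivAt (ν q) (-(q : ℂ) / 4) 0 := by
    rw [funext (hν q)]
    exact (((hasDerivAt_one_add_mul_cpow (q : ℂ) (1 / 2)).const_mul (1 / 2)).const_sub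
      (1 / 2)).congr_deriv (by ring)
  have hν_zero (q : ℝ) : ν q 0 = 0 := by norm_num [hν]
  -- exponents written as `1` and `1 + 1` to match `isBigO_mul_sub_mul_pow`
  have factor (e₀ e₁ e₂ : ℂ) :
      (fun κ => sin (e₀ * (π * ν q₀ κ) + e₁ * (π * ν q₁ κ) + e₂ * (π * ν q₂ κ))
        - -(π / 4 * (e₀ * q₀ + e₁ * q₁ + e₂ * q₂)) * κ ^ 1) =O[𝓝 0] fun κ => κ ^ (1 + 1) := by
    have hu : HasDerivAt (fun κ => e₀ * (π * ν q₀ κ) + e₁ * (π * ν q₁ κ) + e₂ * (π * ν q₂ κ))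
        (-(π / 4 * (e₀ * q₀ + e₁ * q₁ + e₂ * q₂))) 0 :=
      ((((hν_deriv q₀).const_mul _).const_mul e₀).add (((hν_deriv q₁).const_mul _).const_mul e₁)
        |>.add (((hν_deriv q₂).const_mul _).const_mul e₂)).congr_deriv (by ring)
    simpa using isBigO_sin_comp_sub_mul (by fun_prop) (by simp [hν_zero]) hu
  have product := isBigO_mul_sub_mul_pow (isBigO_mul_sub_mul_pow (isBigO_mul_sub_mul_pow
    (factor 1 1 1) (factor (-1) 1 1)) (factor 1 (-1) 1)) (factor 1 1 (-1))
  refine ((product.const_mul_left 4).congr_left fun κ => ?_).congr_right fun κ => by norm_num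
  have h := goldmanPoly_cos_two_mul (π * ν q₀ κ) (π * ν q₁ κ) (π * ν q₂ κ)
  simp only [goldmanPoly, ← mul_assoc, ← ht] at h
  simp only [one_mul, neg_one_mul, ← sub_eq_add_neg]
  rw [hφ, h, hc]
  push_cast
  ring
end
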